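/- On ℝ^{2n} with Euclidean metric, standard symplectic form, and f = (T/2) Σᵢ λᵢ xᵢ², the deformed symplectic Laplacian equals Δ_{d^Λ_f} = d_f^{Λ*}d_f^Λ + d_f^Λ d_f^{Λ*} = Σᵢ(−∂ᵢ² + T²xᵢ² − T) + T Σᵢ (1 + λ_{Ji} − 2λ_{Ji} eᵢ eᵢ†), where λ_{J(2i−1)} = λ_{2i} and λ_{J(2i)} = λ_{2i−1}. Consequently Δ_{d_f} − Δ_{d^Λ_f} = 2T Σ_{i=1}^n (λ_{2i−1}+λ_{2i})(e_{2i−1}e_{2i−1}† + e_{2i}e_{2i}† − 1). -/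

import Mathlib

/-!
Concrete model of differential forms on `ℝ^{2n}`: a form is a family of
coefficient functions indexed by finite subsets `S ⊆ {0, …, 2n−1}` of
coordinate indices, representing `∑_S α_S dx_S`.  The metric is Euclidean and
the symplectic form is the standard `ω = ∑_{i<n} dx_{2i} ∧ dx_{2i+1}`
(0-indexed version of `∑ dx_{2i−1} ∧ dx_{2i}`); likewise all index pairs
`(2i−1, 2i)` of the paper appear here 0-indexed as `(2i, 2i+1)`.
-/

noncomputable section

/-- Points of `ℝ^{2n}`. -/
abbrev Pt (n : ℕ) := Fin (2 * n) → ℝ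

/-- Differential forms on `ℝ^{2n}` in coordinate components. -/
abbrev FForm (n : ℕ) := Finset ℕ → Pt n → ℝ

/-- The sign `(-1)^{#{j ∈ S : j < i}}`. -/
def sgn (i : ℕ) (S : Finset ℕ) : ℝ := (-1 : ℝ) ^ (S.filter (· < i)).card

/-- The partial derivative `∂ᵢ` of a function on `ℝ^{2n}`. -/
def pd (n i : ℕ) (g : Pt n → ℝ) : Pt n → ℝ :=
  fun x => if h : i < 2 * n then fderiv ℝ g x (Pi.single ⟨i, h⟩ (1 : ℝ)) else 0

/-- The coordinate function `xᵢ`. -/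
def Xc (n i : ℕ) (x : Pt n) : ℝ := if h : i < 2 * n then x ⟨i, h⟩ else 0

/-- `eᵢ = dxᵢ ∧ ·`. -/
def wdgF (n : ℕ) (i : ℕ) (α : FForm n) : FForm n :=
  fun S x => if i ∈ S then sgn i S * α (S.erase i) x else 0

/-- `eᵢ† = ι_{∂ᵢ}`. -/
def ctrF (n : ℕ) (i : ℕ) (α : FForm n) : FForm n :=
  fun S x => if i ∈ S then 0 else sgn i S * α (insert i S) x

/-- The exterior derivative `d = ∑ᵢ eᵢ ∂ᵢ`. -/
def dExt (n : ℕ) (α : FForm n) : FForm n :=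
  fun S x => ∑ i ∈ Finset.range (2 * n), wdgF n i (fun S' => pd n i (α S')) S x

/-- The codifferential `d* = −∑ᵢ eᵢ† ∂ᵢ` for the Euclidean metric. -/
def dStar (n : ℕ) (α : FForm n) : FForm n :=
  fun S x => -∑ i ∈ Finset.range (2 * n), ctrF n i (fun S' => pd n i (α S')) S x

/-- The quadratic Morse function `f = (T/2) ∑ᵢ λᵢ xᵢ²`. -/
def fquad (n : ℕ) (T : ℝ) (lam : ℕ → ℝ) : Pt n → ℝ :=
  fun x => (T / 2) * ∑ i ∈ Finset.range (2 * n), lam i * (Xc n i x) ^ 2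

/-- The Witten-deformed differential `d_f = d + df ∧ · = d + ∑ᵢ (∂ᵢf) eᵢ`. -/
def dW (n : ℕ) (T : ℝ) (lam : ℕ → ℝ) (α : FForm n) : FForm n :=
  fun S x => dExt n α S x +
    ∑ i ∈ Finset.range (2 * n), pd n i (fquad n T lam) x * wdgF n i α S x

/-- The Witten-deformed codifferential `d_f* = d* + ι_{∇f} = d* + ∑ᵢ (∂ᵢf) eᵢ†`. -/
def dWStar (n : ℕ) (T : ℝ) (lam : ℕ → ℝ) (α : FForm n) : FForm n :=
  fun S x => dStar n α S x +
    ∑ i ∈ Finset.range (2 * n), pd n i (fquad n T lam) x * ctrF n i α S x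

/-- The Witten-deformed Hodge Laplacian `Δ_{d_f} = d_f* d_f + d_f d_f*`. -/
def LapW (n : ℕ) (T : ℝ) (lam : ℕ → ℝ) (α : FForm n) : FForm n :=
  fun S x => dWStar n T lam (dW n T lam α) S x + dW n T lam (dWStar n T lam α) S x

/-- The dual Lefschetz operator `Λ = ι_π`, `π = ∑_{i<n} ∂_{2i} ∧ ∂_{2i+1}`. -/
def LamF (n : ℕ) (α : FForm n) : FForm n :=
  fun S x => ∑ i ∈ Finset.range n, ctrF n (2 * i + 1) (ctrF n (2 * i) α) S x

/-- The Lefschetz operator `L = ω ∧ ·`, `ω = ∑_{i<n} dx_{2i} ∧ dx_{2i+1}`. -/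
def LF (n : ℕ) (α : FForm n) : FForm n :=
  fun S x => ∑ i ∈ Finset.range n, wdgF n (2 * i) (wdgF n (2 * i + 1) α) S x

/-- The deformed symplectic differential `d_f^Λ = [d_f, Λ]`. -/
def dWL (n : ℕ) (T : ℝ) (lam : ℕ → ℝ) (α : FForm n) : FForm n :=
  fun S x => dW n T lam (LamF n α) S x - LamF n (dW n T lam α) S x

/-- The deformed symplectic codifferential `d_f^{Λ*} = [L, d_f*]`. -/
def dWLStar (n : ℕ) (T : ℝ) (lam : ℕ → ℝ) (α : FForm n) : FForm n :=
  fun S x => LF n (dWStar n T lam α) S x - dWStar n T lam (LF n α) S x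

/-- The deformed symplectic Laplacian `Δ_{d_f^Λ} = d_f^{Λ*}d_f^Λ + d_f^Λ d_f^{Λ*}`. -/
def LapWL (n : ℕ) (T : ℝ) (lam : ℕ → ℝ) (α : FForm n) : FForm n :=
  fun S x => dWLStar n T lam (dWL n T lam α) S x + dWL n T lam (dWLStar n T lam α) S x

/-- `λ_{Ji}`: the partner eigenvalue, `λ_{J(2i−1)} = λ_{2i}`, `λ_{J(2i)} = λ_{2i−1}`
(0-indexed: `λ_{J(2i)} = λ_{2i+1}`, `λ_{J(2i+1)} = λ_{2i}`). -/
def lamJ (lam : ℕ → ℝ) (i : ℕ) : ℝ := if i % 2 = 0 then lam (i + 1) else lam (i - 1)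

set_option maxHeartbeats 1000000

lemma pd_zero (n i : ℕ) : pd n i (fun _ => (0:ℝ)) = fun _ => 0 := by
  funext x; unfold pd; split
  · simp [fderiv_const]
  · rfl

lemma pd_const_mul {n i : ℕ} (c : ℝ) {g : Pt n → ℝ} (hg : Differentiable ℝ g) :
    pd n i (fun x => c * g x) = fun x => c * pd n i g x := by
  funext x; unfold pd; split
  · rw [fderiv_const_mul (hg x) c]; simp
  · ring

lemma pd_add {n i : ℕ} {g h : Pt n → ℝ} (hg : Differentiable ℝ g) (hh : Differentiable ℝ h) :
    pd n i (fun x => g x + h x) = fun x => pd n i g x + pd n i h x := by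
  funext x; unfold pd; split
  · rw [fderiv_fun_add (hg x) (hh x)]; simp
  · ring

lemma pd_neg {n i : ℕ} {g : Pt n → ℝ} :
    pd n i (fun x => -(g x)) = fun x => -(pd n i g x) := by
  funext x; unfold pd; split
  · rw [fderiv_fun_neg]; simp
  · ring

lemma pd_sub {n i : ℕ} {g h : Pt n → ℝ} (hg : Differentiable ℝ g) (hh : Differentiable ℝ h) :
    pd n i (fun x => g x - h x) = fun x => pd n i g x - pd n i h x := by
  funext x; unfold pd; split
  · rw [fderiv_fun_sub (hg x) (hh x)]; simp
  · ring

lemma pd_sum {n j : ℕ} {ι : Type*} (s : Finset ι) (F : ι → Pt n → ℝ)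
    (h : ∀ i ∈ s, Differentiable ℝ (F i)) :
    pd n j (fun x => ∑ i ∈ s, F i x) = fun x => ∑ i ∈ s, pd n j (F i) x := by
  funext x; unfold pd; split
  · rw [fderiv_fun_sum (fun i hi => (h i hi) x)]; simp
  · simp

lemma pd_smooth {n i : ℕ} {g : Pt n → ℝ} (hg : ContDiff ℝ (⊤ : ℕ∞) g) :
    ContDiff ℝ (⊤ : ℕ∞) (pd n i g) := by
  unfold pd
  split
  · exact (hg.fderiv_right (by simp)).clm_apply contDiff_const
  · exact contDiff_const

lemma pd_differentiable {n i : ℕ} {g : Pt n → ℝ} (hg : ContDiff ℝ (⊤ : ℕ∞) g) :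
    Differentiable ℝ (pd n i g) := (pd_smooth hg).differentiable (by simp)

lemma pd_oob {n i : ℕ} (h : 2*n ≤ i) (g : Pt n → ℝ) : pd n i g = fun _ => 0 := by
  funext x; unfold pd; rw [dif_neg (by omega)]

lemma pd_comm {n i j : ℕ} {g : Pt n → ℝ} (hg : ContDiff ℝ (⊤ : ℕ∞) g) :
    pd n i (pd n j g) = pd n j (pd n i g) := by
  rcases lt_or_ge i (2*n) with hi | hi
  · rcases lt_or_ge j (2*n) with hj | hj
    · funext x
      have hd : Differentiable ℝ (fderiv ℝ g) := (hg.fderiv_right (m := 1) (by exact WithTop.coe_le_coe.2 le_top)).differentiable one_ne_zero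
      have key : ∀ (v w : Pt n),
          fderiv ℝ (fun y => fderiv ℝ g y v) x w = fderiv ℝ (fderiv ℝ g) x w v := by
        intro v w
        rw [fderiv_clm_apply (hd x) (differentiableAt_const v)]
        simp
      have hsymm : IsSymmSndFDerivAt ℝ g x :=
        (hg.contDiffAt).isSymmSndFDerivAt (by rw [minSmoothness_of_isRCLikeNormedField]; exact WithTop.coe_le_coe.2 le_top)
      show pd n i (pd n j g) x = pd n j (pd n i g) x
      unfold pd
      rw [dif_pos hi, dif_pos hj]
      have e1 : (fun y => if h : j < 2*n then fderiv ℝ g y (Pi.single ⟨j,h⟩ (1:ℝ)) else 0)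
          = fun y => fderiv ℝ g y (Pi.single ⟨j,hj⟩ (1:ℝ)) := by
        funext y; rw [dif_pos hj]
      have e2 : (fun y => if h : i < 2*n then fderiv ℝ g y (Pi.single ⟨i,h⟩ (1:ℝ)) else 0)
          = fun y => fderiv ℝ g y (Pi.single ⟨i,hi⟩ (1:ℝ)) := by
        funext y; rw [dif_pos hi]
      rw [e1, e2, key, key]
      exact hsymm _ _
    · rw [pd_oob hj, pd_zero, pd_oob hj]
  · rw [pd_oob hi, pd_oob hi, pd_zero]

lemma Xc_eq {n k : ℕ} (hk : k < 2*n) : Xc n k = fun x => x ⟨k, hk⟩ := by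
  funext x; unfold Xc; rw [dif_pos hk]

lemma Xc_smooth (n k : ℕ) : ContDiff ℝ (⊤ : ℕ∞) (Xc n k) := by
  unfold Xc; split
  · exact (ContinuousLinearMap.proj (R := ℝ) (φ := fun _ : Fin (2*n) => ℝ) _).contDiff
  · exact contDiff_const

lemma Xc_differentiable (n k : ℕ) : Differentiable ℝ (Xc n k) :=
  (Xc_smooth n k).differentiable (by simp)

lemma hasFDerivAt_Xc {n k : ℕ} (hk : k < 2*n) (x : Pt n) :
    HasFDerivAt (Xc n k) (ContinuousLinearMap.proj (R := ℝ) (φ := fun _ : Fin (2*n) => ℝ) ⟨k, hk⟩) x := by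
  rw [Xc_eq hk]
  exact (ContinuousLinearMap.proj (R := ℝ) (φ := fun _ : Fin (2*n) => ℝ) ⟨k, hk⟩).hasFDerivAt

lemma pd_Xc {n i k : ℕ} (hi : i < 2*n) :
    pd n i (Xc n k) = fun _ => if i = k then (1:ℝ) else 0 := by
  funext x
  unfold pd; rw [dif_pos hi]
  rcases lt_or_ge k (2*n) with hk | hk
  · rw [(hasFDerivAt_Xc hk x).fderiv]
    simp only [ContinuousLinearMap.proj_apply, Pi.single_apply]
    by_cases h : i = k
    · subst h; simp
    · rw [if_neg (by simp [Fin.ext_iff]; omega), if_neg h]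
  · have : Xc n k = fun _ : Pt n => (0:ℝ) := by
      funext y; unfold Xc; rw [dif_neg (by omega)]
    rw [this, fderiv_fun_const]
    have hik : i ≠ k := by omega
    simp [hik]

lemma pd_coord_mul {n i k : ℕ} (hi : i < 2*n) {g : Pt n → ℝ} (hg : Differentiable ℝ g) :
    pd n i (fun x => Xc n k x * g x) =
      fun x => (if i = k then g x else 0) + Xc n k x * pd n i g x := by
  funext x
  have h1 : pd n i (fun x => Xc n k x * g x) x
      = Xc n k x * pd n i g x + g x * pd n i (Xc n k) x := by
    unfold pd
    simp only [dif_pos hi]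
    rw [fderiv_fun_mul (Xc_differentiable n k x) (hg x)]
    simp
  rw [h1, pd_Xc hi]
  by_cases h : i = k <;> simp [h] <;> ring

lemma pd_fquad {n : ℕ} (T : ℝ) (lam : ℕ → ℝ) {j : ℕ} (hj : j < 2*n) :
    pd n j (fquad n T lam) = fun x => T * lam j * Xc n j x := by
  have hsq : ∀ i, (fun x : Pt n => lam i * (Xc n i x)^2) = fun x => lam i * (Xc n i x * Xc n i x) := by
    intro i; funext x; ring
  have hdiff : ∀ i : ℕ, Differentiable ℝ (fun x : Pt n => lam i * (Xc n i x * Xc n i x)) := by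
    intro i
    exact (differentiable_const _).mul ((Xc_differentiable n i).mul (Xc_differentiable n i))
  have : fquad n T lam = fun x => (T/2) * ∑ i ∈ Finset.range (2*n), lam i * (Xc n i x * Xc n i x) := by
    funext x; unfold fquad; congr 1; exact Finset.sum_congr rfl (fun i _ => by ring)
  rw [this]
  rw [pd_const_mul (T/2) (Differentiable.fun_sum (fun i _ => hdiff i))]
  have hpsum := pd_sum (n := n) (j := j) (Finset.range (2*n))
      (fun i x => lam i * (Xc n i x * Xc n i x)) (fun i _ => hdiff i)
  rw [hpsum]
  funext x
  show T / 2 * ∑ i ∈ Finset.range (2*n), pd n j (fun x => lam i * (Xc n i x * Xc n i x)) x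
      = T * lam j * Xc n j x
  have hterm : ∀ i ∈ Finset.range (2*n),
      pd n j (fun x => lam i * (Xc n i x * Xc n i x)) x
        = lam i * ((if j = i then Xc n i x else 0) + (if j = i then Xc n i x else 0)) := by
    intro i hi
    rw [pd_const_mul (lam i) ((Xc_differentiable n i).fun_mul (Xc_differentiable n i))]
    rw [pd_coord_mul hj (Xc_differentiable n i), pd_Xc hj]
    by_cases h : j = i <;> simp [h] <;> ring
  rw [Finset.sum_congr rfl hterm]
  rw [Finset.sum_eq_single j (fun i _ hne => by simp [Ne.symm hne])
      (fun h => absurd (Finset.mem_range.2 hj) h)]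
  simp
  ring

lemma sgn_mul_self (i : ℕ) (S : Finset ℕ) : sgn i S * sgn i S = 1 := by
  unfold sgn; rw [← pow_add, ← two_mul, pow_mul]; norm_num

lemma sgn_erase (i : ℕ) (S : Finset ℕ) : sgn i (S.erase i) = sgn i S := by
  unfold sgn
  congr 1
  rw [Finset.filter_erase, Finset.erase_eq_of_notMem (by simp)]

lemma sgn_insert_self (i : ℕ) (S : Finset ℕ) : sgn i (insert i S) = sgn i S := by
  unfold sgn
  congr 1
  rw [Finset.filter_insert, if_neg (by simp)]

-- CAR diagonal
lemma car_diag {n : ℕ} (i : ℕ) (α : FForm n) (S : Finset ℕ) (x : Pt n) :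
    wdgF n i (ctrF n i α) S x + ctrF n i (wdgF n i α) S x = α S x := by
  simp only [wdgF, ctrF]
  by_cases h : i ∈ S
  · rw [if_pos h, if_pos h, if_neg (Finset.notMem_erase i S)]
    rw [Finset.insert_erase h, sgn_erase, ← mul_assoc, sgn_mul_self]
    ring
  · rw [if_neg h, if_neg h, if_pos (Finset.mem_insert_self i S)]
    rw [Finset.erase_insert h, sgn_insert_self, ← mul_assoc, sgn_mul_self]
    ring

lemma sgn_swap {i j : ℕ} (hij : i ≠ j) (S : Finset ℕ) (hi : i ∈ S) (hj : j ∉ S) :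
    sgn i S * sgn j (S.erase i) = -(sgn j S * sgn i (insert j S)) := by
  unfold sgn
  rw [Finset.filter_erase, Finset.filter_insert]
  rcases lt_or_gt_of_ne hij with h | h
  · have hmem : i ∈ S.filter (· < j) := Finset.mem_filter.2 ⟨hi, h⟩
    rw [if_neg (by omega), Finset.card_erase_of_mem hmem]
    obtain ⟨k, hk⟩ : ∃ k, (S.filter (· < j)).card = k + 1 := by
      have : 0 < (S.filter (· < j)).card := Finset.card_pos.2 ⟨i, hmem⟩
      exact ⟨(S.filter (· < j)).card - 1, by omega⟩
    rw [hk, Nat.add_sub_cancel, pow_succ]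
    ring
  · have hjn : j ∉ S.filter (· < i) := fun hc => hj (Finset.mem_filter.1 hc).1
    rw [if_pos (by omega : j < i), Finset.card_insert_of_notMem hjn,
        Finset.erase_eq_of_notMem (fun hc => absurd (Finset.mem_filter.1 hc).2 (by omega)),
        pow_succ]
    ring

lemma car_off {n : ℕ} {i j : ℕ} (hij : i ≠ j) (α : FForm n) :
    wdgF n i (ctrF n j α) = fun S x => -(ctrF n j (wdgF n i α) S x) := by
  funext S x
  simp only [wdgF, ctrF]
  by_cases hi : i ∈ S
  · by_cases hj : j ∈ S
    · rw [if_pos hi, if_pos (Finset.mem_erase.2 ⟨hij.symm, hj⟩), if_pos hj]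
      ring
    · rw [if_pos hi, if_neg (fun hc => hj (Finset.mem_of_mem_erase hc)), if_neg hj,
          if_pos (Finset.mem_insert.2 (Or.inr hi))]
      have hsets : insert j (S.erase i) = (insert j S).erase i := by
        ext a
        simp only [Finset.mem_insert, Finset.mem_erase]
        constructor
        · rintro (rfl | ⟨h1, h2⟩)
          · exact ⟨hij.symm, Or.inl rfl⟩
          · exact ⟨h1, Or.inr h2⟩
        · rintro ⟨h1, (rfl | h2)⟩
          · exact Or.inl rfl
          · exact Or.inr ⟨h1, h2⟩
      rw [← hsets]
      have key := sgn_swap hij S hi hj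
      calc sgn i S * (sgn j (S.erase i) * α (insert j (S.erase i)) x)
          = (sgn i S * sgn j (S.erase i)) * α (insert j (S.erase i)) x := by ring
        _ = -(sgn j S * (sgn i (insert j S) * α (insert j (S.erase i)) x)) := by rw [key]; ring
  · by_cases hj : j ∈ S
    · rw [if_neg hi, if_pos hj]; ring
    · rw [if_neg hi, if_neg hj,
          if_neg (fun hc => hi ((Finset.mem_insert.1 hc).resolve_left hij)), mul_zero]
      ring

/-- Scalar (coefficient) operator `a·∂ⱼ + c·xⱼ`. -/
def Sop (n j : ℕ) (a c : ℝ) (α : FForm n) : FForm n :=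
  fun S x => a * pd n j (α S) x + c * Xc n j x * α S x

lemma Sop_apply (n j : ℕ) (a c : ℝ) (α : FForm n) (S : Finset ℕ) :
    Sop n j a c α S = fun x => a * pd n j (α S) x + c * Xc n j x * α S x := rfl

/-- Smoothness of all components. -/
def SM (n : ℕ) (α : FForm n) : Prop := ∀ S, ContDiff ℝ (⊤ : ℕ∞) (α S)

lemma wdg_apply_mem {n i : ℕ} (β : FForm n) {S : Finset ℕ} (h : i ∈ S) :
    wdgF n i β S = fun x => sgn i S * β (S.erase i) x := by
  funext x; simp only [wdgF, if_pos h]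

lemma wdg_apply_not_mem {n i : ℕ} (β : FForm n) {S : Finset ℕ} (h : i ∉ S) :
    wdgF n i β S = fun _ => 0 := by
  funext x; simp only [wdgF, if_neg h]

lemma ctr_apply_mem {n i : ℕ} (β : FForm n) {S : Finset ℕ} (h : i ∈ S) :
    ctrF n i β S = fun _ => 0 := by
  funext x; simp only [ctrF, if_pos h]

lemma ctr_apply_not_mem {n i : ℕ} (β : FForm n) {S : Finset ℕ} (h : i ∉ S) :
    ctrF n i β S = fun x => sgn i S * β (insert i S) x := by
  funext x; simp only [ctrF, if_neg h]

lemma SM_wdg {n : ℕ} {α : FForm n} (hα : SM n α) (i : ℕ) : SM n (wdgF n i α) := by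
  intro S
  by_cases h : i ∈ S
  · rw [wdg_apply_mem α h]; exact contDiff_const.mul (hα _)
  · rw [wdg_apply_not_mem α h]; exact contDiff_const

lemma SM_ctr {n : ℕ} {α : FForm n} (hα : SM n α) (i : ℕ) : SM n (ctrF n i α) := by
  intro S
  by_cases h : i ∈ S
  · rw [ctr_apply_mem α h]; exact contDiff_const
  · rw [ctr_apply_not_mem α h]; exact contDiff_const.mul (hα _)

lemma SM_Sop {n : ℕ} {α : FForm n} (hα : SM n α) (j : ℕ) (a c : ℝ) : SM n (Sop n j a c α) := by
  intro S
  exact (contDiff_const.mul (pd_smooth (hα S))).add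
    ((contDiff_const.mul (Xc_smooth n j)).mul (hα S))

lemma wdg_Sop {n : ℕ} {β : FForm n} (hβ : SM n β) (i j : ℕ) (a c : ℝ) :
    wdgF n i (Sop n j a c β) = Sop n j a c (wdgF n i β) := by
  funext S x
  simp only [Sop]
  by_cases h : i ∈ S
  · rw [wdg_apply_mem _ h, wdg_apply_mem β h,
      pd_const_mul (sgn i S) ((hβ _).differentiable (by simp))]
    show sgn i S * Sop n j a c β (S.erase i) x = _
    simp only [Sop]
    ring
  · rw [wdg_apply_not_mem _ h, wdg_apply_not_mem β h, pd_zero]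
    simp

lemma ctr_Sop {n : ℕ} {β : FForm n} (hβ : SM n β) (i j : ℕ) (a c : ℝ) :
    ctrF n i (Sop n j a c β) = Sop n j a c (ctrF n i β) := by
  funext S x
  simp only [Sop]
  by_cases h : i ∈ S
  · rw [ctr_apply_mem _ h, ctr_apply_mem β h, pd_zero]
    simp
  · rw [ctr_apply_not_mem _ h, ctr_apply_not_mem β h,
      pd_const_mul (sgn i S) ((hβ _).differentiable (by simp))]
    show sgn i S * Sop n j a c β (insert i S) x = _
    simp only [Sop]
    ring

lemma wdg_sum {n i : ℕ} {ι : Type*} (s : Finset ι) (F : ι → FForm n) :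
    wdgF n i (fun S x => ∑ k ∈ s, F k S x) = fun S x => ∑ k ∈ s, wdgF n i (F k) S x := by
  funext S x
  by_cases h : i ∈ S
  · rw [wdg_apply_mem _ h]
    show sgn i S * ∑ k ∈ s, F k (S.erase i) x = _
    rw [Finset.mul_sum]
    exact Finset.sum_congr rfl (fun k _ => by rw [wdg_apply_mem (F k) h])
  · rw [wdg_apply_not_mem _ h]
    show (0:ℝ) = _
    rw [Finset.sum_congr rfl (fun k _ => by rw [wdg_apply_not_mem (F k) h] :
      ∀ k ∈ s, wdgF n i (F k) S x = 0), Finset.sum_const_zero]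

lemma ctr_sum {n i : ℕ} {ι : Type*} (s : Finset ι) (F : ι → FForm n) :
    ctrF n i (fun S x => ∑ k ∈ s, F k S x) = fun S x => ∑ k ∈ s, ctrF n i (F k) S x := by
  funext S x
  by_cases h : i ∈ S
  · rw [ctr_apply_mem _ h]
    show (0:ℝ) = _
    rw [Finset.sum_congr rfl (fun k _ => by rw [ctr_apply_mem (F k) h] :
      ∀ k ∈ s, ctrF n i (F k) S x = 0), Finset.sum_const_zero]
  · rw [ctr_apply_not_mem _ h]
    show sgn i S * ∑ k ∈ s, F k (insert i S) x = _
    rw [Finset.mul_sum]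
    exact Finset.sum_congr rfl (fun k _ => by rw [ctr_apply_not_mem (F k) h])

lemma ctr_neg {n i : ℕ} (β : FForm n) :
    ctrF n i (fun S x => -(β S x)) = fun S x => -(ctrF n i β S x) := by
  funext S x
  by_cases h : i ∈ S
  · rw [ctr_apply_mem _ h, ctr_apply_mem β h]; simp
  · rw [ctr_apply_not_mem _ h, ctr_apply_not_mem β h]; show sgn i S * (-(β _ x)) = _; ring

lemma Sop_sum {n j : ℕ} (a c : ℝ) {ι : Type*} (s : Finset ι) (F : ι → FForm n)
    (hF : ∀ k ∈ s, SM n (F k)) :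
    Sop n j a c (fun S x => ∑ k ∈ s, F k S x) = fun S x => ∑ k ∈ s, Sop n j a c (F k) S x := by
  funext S x
  simp only [Sop]
  rw [pd_sum s (fun k => F k S) (fun k hk => ((hF k hk) S).differentiable (by simp))]
  rw [Finset.sum_add_distrib, Finset.mul_sum, Finset.mul_sum]

lemma Sop_sub {n j : ℕ} (a c : ℝ) {β γ : FForm n} (hβ : SM n β) (hγ : SM n γ) :
    Sop n j a c (fun S x => β S x - γ S x) = fun S x => Sop n j a c β S x - Sop n j a c γ S x := by
  funext S x
  simp only [Sop]
  rw [pd_sub ((hβ S).differentiable (by simp)) ((hγ S).differentiable (by simp))]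
  ring

lemma Sop_Sop_comm {n j k : ℕ} (hj : j < 2*n) (hk : k < 2*n) (hjk : j ≠ k)
    (a c a' c' : ℝ) {α : FForm n} (hα : SM n α) :
    Sop n j a c (Sop n k a' c' α) = Sop n k a' c' (Sop n j a c α) := by
  funext S x
  simp only [Sop_apply]
  have hd : Differentiable ℝ (α S) := (hα S).differentiable (by simp)
  have hpd : ∀ m, Differentiable ℝ (pd n m (α S)) := fun m => pd_differentiable (hα S)
  have e1 : ∀ (m m' : ℕ) (a₀ c₀ : ℝ), m' < 2*n →
      pd n m (fun x => a₀ * pd n m' (α S) x + c₀ * Xc n m' x * α S x)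
      = fun x => a₀ * pd n m (pd n m' (α S)) x
          + c₀ * ((if m = m' then α S x else 0) + Xc n m' x * pd n m (α S) x) := by
    intro m m' a₀ c₀ hm'
    rcases lt_or_ge m (2*n) with hm | hm
    · rw [pd_add ((differentiable_const _).fun_mul (hpd m'))
        (((differentiable_const _).fun_mul (Xc_differentiable n m')).fun_mul hd),
        pd_const_mul a₀ (hpd m')]
      funext y
      have : (fun x => c₀ * Xc n m' x * α S x) = fun x => c₀ * (Xc n m' x * α S x) := by
        funext z; ring
      rw [this, pd_const_mul c₀ ((Xc_differentiable n m').fun_mul hd), pd_coord_mul hm hd]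
    · have hmm' : m ≠ m' := by omega
      simp only [pd_oob hm]
      funext y
      simp [hmm']
  rw [e1 j k a' c' hk, e1 k j a c hj]
  beta_reduce
  rw [if_neg hjk, if_neg (Ne.symm hjk)]
  rw [pd_comm (hα S)]
  ring

lemma Sop_AB {n j : ℕ} (hj : j < 2*n) (c : ℝ) {α : FForm n} (hα : SM n α) :
    Sop n j (-1) c (Sop n j 1 c α) =
      fun S x => -(pd n j (pd n j (α S)) x) + c^2 * (Xc n j x)^2 * α S x - c * α S x := by
  funext S x
  simp only [Sop_apply]
  have hd : Differentiable ℝ (α S) := (hα S).differentiable (by simp)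
  have hpd : Differentiable ℝ (pd n j (α S)) := pd_differentiable (hα S)
  have e1 : pd n j (fun x => 1 * pd n j (α S) x + c * Xc n j x * α S x)
      = fun x => 1 * pd n j (pd n j (α S)) x
          + c * (α S x + Xc n j x * pd n j (α S) x) := by
    rw [pd_add ((differentiable_const _).fun_mul hpd)
      (((differentiable_const _).fun_mul (Xc_differentiable n j)).fun_mul hd),
      pd_const_mul 1 hpd]
    funext y
    have : (fun x => c * Xc n j x * α S x) = fun x => c * (Xc n j x * α S x) := by
      funext z; ring
    rw [this, pd_const_mul c ((Xc_differentiable n j).fun_mul hd), pd_coord_mul hj hd]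
    simp
  rw [e1]
  ring

lemma Sop_BA {n j : ℕ} (hj : j < 2*n) (c : ℝ) {α : FForm n} (hα : SM n α) :
    Sop n j 1 c (Sop n j (-1) c α) =
      fun S x => -(pd n j (pd n j (α S)) x) + c^2 * (Xc n j x)^2 * α S x + c * α S x := by
  funext S x
  simp only [Sop_apply]
  have hd : Differentiable ℝ (α S) := (hα S).differentiable (by simp)
  have hpd : Differentiable ℝ (pd n j (α S)) := pd_differentiable (hα S)
  have e1 : pd n j (fun x => (-1) * pd n j (α S) x + c * Xc n j x * α S x)
      = fun x => (-1) * pd n j (pd n j (α S)) x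
          + c * (α S x + Xc n j x * pd n j (α S) x) := by
    rw [pd_add ((differentiable_const _).fun_mul hpd)
      (((differentiable_const _).fun_mul (Xc_differentiable n j)).fun_mul hd),
      pd_const_mul (-1) hpd]
    funext y
    have : (fun x => c * Xc n j x * α S x) = fun x => c * (Xc n j x * α S x) := by
      funext z; ring
    rw [this, pd_const_mul c ((Xc_differentiable n j).fun_mul hd), pd_coord_mul hj hd]
    simp
  rw [e1]
  ring

def sig (j : ℕ) : ℕ := if j % 2 = 0 then j + 1 else j - 1
def co (j : ℕ) : ℝ := if j % 2 = 0 then -1 else 1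

lemma sig_sig (j : ℕ) : sig (sig j) = j := by
  unfold sig; split <;> split <;> omega
lemma sig_ne {j k : ℕ} (h : j ≠ k) : sig j ≠ sig k := by
  intro hc; exact h (by rw [← sig_sig j, hc, sig_sig])
lemma co_sq (j : ℕ) : co j * co j = 1 := by
  unfold co; split <;> norm_num
lemma lam_sig (lam : ℕ → ℝ) (j : ℕ) : lam (sig j) = lamJ lam j := by
  unfold sig lamJ; split <;> rfl
lemma sig_two_mul (i : ℕ) : sig (2*i) = 2*i+1 := by
  unfold sig; rw [if_pos (by omega)]
lemma sig_two_mul_add_one (i : ℕ) : sig (2*i+1) = 2*i := by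
  unfold sig; rw [if_neg (by omega)]; omega

lemma sum_range_two_mul {M : Type*} [AddCommMonoid M] (n : ℕ) (f : ℕ → M) :
    ∑ j ∈ Finset.range (2*n), f j = ∑ i ∈ Finset.range n, (f (2*i) + f (2*i+1)) := by
  induction n with
  | zero => simp
  | succ m ih =>
    rw [show 2*(m+1) = (2*m+1)+1 by ring, Finset.sum_range_succ, Finset.sum_range_succ, ih,
      Finset.sum_range_succ]
    abel

lemma sum_sig {n : ℕ} (f : ℕ → ℝ) :
    ∑ j ∈ Finset.range (2*n), f (sig j) = ∑ j ∈ Finset.range (2*n), f j := by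
  rw [sum_range_two_mul, sum_range_two_mul]
  refine Finset.sum_congr rfl (fun i _ => ?_)
  rw [sig_two_mul, sig_two_mul_add_one, add_comm]

lemma SM_sum {n : ℕ} {ι : Type*} (s : Finset ι) (F : ι → FForm n)
    (hF : ∀ k ∈ s, SM n (F k)) : SM n (fun S x => ∑ k ∈ s, F k S x) :=
  fun S => ContDiff.sum (fun k hk => hF k hk S)

lemma Sop_neg {n j : ℕ} (a c : ℝ) (β : FForm n) :
    Sop n j a c (fun S x => -(β S x)) = fun S x => -(Sop n j a c β S x) := by
  funext S x
  simp only [Sop_apply]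
  rw [pd_neg]
  ring

lemma Sop_zero {n j : ℕ} (a c : ℝ) :
    Sop n j a c (fun _ _ => (0:ℝ)) = fun _ _ => (0:ℝ) := by
  funext S x
  simp only [Sop_apply]
  rw [pd_zero]
  ring

lemma Sop_smul {n j : ℕ} (a c r : ℝ) {β : FForm n} (hβ : SM n β) :
    Sop n j a c (fun S x => r * β S x) = fun S x => r * Sop n j a c β S x := by
  funext S x
  simp only [Sop_apply]
  rw [pd_const_mul r ((hβ S).differentiable (by simp))]
  ring

lemma wdg_smul {n i : ℕ} (r : ℝ) (β : FForm n) :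
    wdgF n i (fun S x => r * β S x) = fun S x => r * wdgF n i β S x := by
  funext S x
  by_cases h : i ∈ S
  · rw [wdg_apply_mem _ h, wdg_apply_mem β h]; show sgn i S * (r * β _ x) = _; ring
  · rw [wdg_apply_not_mem _ h, wdg_apply_not_mem β h]; simp

lemma ctr_smul {n i : ℕ} (r : ℝ) (β : FForm n) :
    ctrF n i (fun S x => r * β S x) = fun S x => r * ctrF n i β S x := by
  funext S x
  by_cases h : i ∈ S
  · rw [ctr_apply_mem _ h, ctr_apply_mem β h]; simp
  · rw [ctr_apply_not_mem _ h, ctr_apply_not_mem β h]; show sgn i S * (r * β _ x) = _; ring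

lemma wdg_neg {n i : ℕ} (β : FForm n) :
    wdgF n i (fun S x => -(β S x)) = fun S x => -(wdgF n i β S x) := by
  funext S x
  by_cases h : i ∈ S
  · rw [wdg_apply_mem _ h, wdg_apply_mem β h]; show sgn i S * (-(β _ x)) = _; ring
  · rw [wdg_apply_not_mem _ h, wdg_apply_not_mem β h]; simp

lemma wdg_sub {n i : ℕ} (β γ : FForm n) :
    wdgF n i (fun S x => β S x - γ S x) = fun S x => wdgF n i β S x - wdgF n i γ S x := by
  funext S x
  by_cases h : i ∈ S
  · rw [wdg_apply_mem _ h, wdg_apply_mem β h, wdg_apply_mem γ h]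
    show sgn i S * (β _ x - γ _ x) = _; ring
  · rw [wdg_apply_not_mem _ h, wdg_apply_not_mem β h, wdg_apply_not_mem γ h]; simp

lemma ctr_sub {n i : ℕ} (β γ : FForm n) :
    ctrF n i (fun S x => β S x - γ S x) = fun S x => ctrF n i β S x - ctrF n i γ S x := by
  funext S x
  by_cases h : i ∈ S
  · rw [ctr_apply_mem _ h, ctr_apply_mem β h, ctr_apply_mem γ h]; simp
  · rw [ctr_apply_not_mem _ h, ctr_apply_not_mem β h, ctr_apply_not_mem γ h]
    show sgn i S * (β _ x - γ _ x) = _; ring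

lemma wdg_pd {n : ℕ} {β : FForm n} (hβ : SM n β) (i j : ℕ) :
    wdgF n i (fun S' => pd n j (β S')) = fun S => pd n j (wdgF n i β S) := by
  funext S
  by_cases h : i ∈ S
  · rw [wdg_apply_mem _ h, wdg_apply_mem β h,
      pd_const_mul (sgn i S) ((hβ _).differentiable (by simp))]
  · rw [wdg_apply_not_mem _ h, wdg_apply_not_mem β h, pd_zero]

lemma ctr_pd {n : ℕ} {β : FForm n} (hβ : SM n β) (i j : ℕ) :
    ctrF n i (fun S' => pd n j (β S')) = fun S => pd n j (ctrF n i β S) := by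
  funext S
  by_cases h : i ∈ S
  · rw [ctr_apply_mem _ h, ctr_apply_mem β h, pd_zero]
  · rw [ctr_apply_not_mem _ h, ctr_apply_not_mem β h,
      pd_const_mul (sgn i S) ((hβ _).differentiable (by simp))]

section Main
variable {n : ℕ} {T : ℝ} {lam : ℕ → ℝ}

lemma dW_eq {α : FForm n} (hα : SM n α) :
    dW n T lam α = fun S x =>
      ∑ j ∈ Finset.range (2*n), Sop n j 1 (T * lam j) (wdgF n j α) S x := by
  funext S x
  simp only [dW, dExt]
  rw [← Finset.sum_add_distrib]
  refine Finset.sum_congr rfl (fun j hj => ?_)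
  have hj2 : j < 2*n := Finset.mem_range.1 hj
  rw [wdg_pd hα j j, pd_fquad T lam hj2]
  simp only [Sop_apply]
  ring

lemma dWStar_eq {α : FForm n} (hα : SM n α) :
    dWStar n T lam α = fun S x =>
      ∑ j ∈ Finset.range (2*n), Sop n j (-1) (T * lam j) (ctrF n j α) S x := by
  funext S x
  simp only [dWStar, dStar]
  rw [← Finset.sum_neg_distrib, ← Finset.sum_add_distrib]
  refine Finset.sum_congr rfl (fun j hj => ?_)
  have hj2 : j < 2*n := Finset.mem_range.1 hj
  rw [ctr_pd hα j j, pd_fquad T lam hj2]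
  simp only [Sop_apply]
  ring

end Main

-- form-level diagonal CAR
lemma car_diag_w {n : ℕ} (i : ℕ) (α : FForm n) :
    wdgF n i (ctrF n i α) = fun S x => α S x - ctrF n i (wdgF n i α) S x := by
  funext S x
  have := car_diag i α S x
  linarith

-- pointwise variants
lemma car_off_pt {n : ℕ} {i j : ℕ} (hij : i ≠ j) (α : FForm n) (S : Finset ℕ) (x : Pt n) :
    wdgF n i (ctrF n j α) S x = -(ctrF n j (wdgF n i α) S x) := by
  have := car_off hij α
  exact congrFun (congrFun this S) x

lemma ctr_wdg_off {n : ℕ} {i j : ℕ} (hij : i ≠ j) (α : FForm n) :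
    ctrF n j (wdgF n i α) = fun S x => -(wdgF n i (ctrF n j α) S x) := by
  funext S x
  have := car_off_pt hij α S x
  linarith

-- triple CAR: e_j against (c_a ∘ c_b), j ≠ everything cases
lemma car3_eq_a {n : ℕ} {a b : ℕ} (hab : a ≠ b) (α : FForm n) :
    (fun S x => wdgF n a (ctrF n a (ctrF n b α)) S x
        - ctrF n a (ctrF n b (wdgF n a α)) S x) = ctrF n b α := by
  funext S x
  have h1 : wdgF n a (ctrF n a (ctrF n b α)) S x
      = ctrF n b α S x - ctrF n a (wdgF n a (ctrF n b α)) S x := by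
    rw [car_diag_w a (ctrF n b α)]
  have h2 : ctrF n a (ctrF n b (wdgF n a α)) S x
      = -(ctrF n a (wdgF n a (ctrF n b α)) S x) := by
    rw [ctr_wdg_off hab α, ctr_neg]
  rw [h1, h2]
  ring

lemma car3_eq_b {n : ℕ} {a b : ℕ} (hab : a ≠ b) (α : FForm n) :
    (fun S x => wdgF n b (ctrF n a (ctrF n b α)) S x
        - ctrF n a (ctrF n b (wdgF n b α)) S x) = fun S x => -(ctrF n a α S x) := by
  funext S x
  have h1 : wdgF n b (ctrF n a (ctrF n b α)) S x
      = -(ctrF n a (wdgF n b (ctrF n b α)) S x) := car_off_pt (Ne.symm hab) _ S x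
  have h2 : ctrF n a (wdgF n b (ctrF n b α)) S x
      = ctrF n a α S x - ctrF n a (ctrF n b (wdgF n b α)) S x := by
    rw [car_diag_w b α, ctr_sub]
  rw [h1, h2]
  ring

lemma car3_ne {n : ℕ} {a b j : ℕ} (hja : j ≠ a) (hjb : j ≠ b) (α : FForm n) :
    (fun S x => wdgF n j (ctrF n a (ctrF n b α)) S x
        - ctrF n a (ctrF n b (wdgF n j α)) S x) = fun _ _ => (0:ℝ) := by
  funext S x
  have h1 : wdgF n j (ctrF n a (ctrF n b α)) S x
      = -(ctrF n a (wdgF n j (ctrF n b α)) S x) := car_off_pt hja _ S x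
  have h2 : ctrF n a (wdgF n j (ctrF n b α)) S x
      = -(ctrF n a (ctrF n b (wdgF n j α)) S x) := by
    rw [car_off hjb α, ctr_neg]
  rw [h1, h2]
  ring

-- triple CAR: c_j against (e_a ∘ e_b)
lemma car3c_eq_a {n : ℕ} {a b : ℕ} (hab : a ≠ b) (α : FForm n) :
    (fun S x => wdgF n a (wdgF n b (ctrF n a α)) S x
        - ctrF n a (wdgF n a (wdgF n b α)) S x) = fun S x => -(wdgF n b α S x) := by
  funext S x
  have h1 : wdgF n b (ctrF n a α) = fun S x => -(ctrF n a (wdgF n b α) S x) :=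
    car_off (Ne.symm hab) α
  have h2 : wdgF n a (ctrF n a (wdgF n b α)) S x
      = wdgF n b α S x - ctrF n a (wdgF n a (wdgF n b α)) S x := by
    rw [car_diag_w a (wdgF n b α)]
  rw [h1, wdg_neg]
  beta_reduce
  rw [h2]
  ring

lemma car3c_eq_b {n : ℕ} {a b : ℕ} (hab : a ≠ b) (α : FForm n) :
    (fun S x => wdgF n a (wdgF n b (ctrF n b α)) S x
        - ctrF n b (wdgF n a (wdgF n b α)) S x) = wdgF n a α := by
  funext S x
  have h1 : wdgF n b (ctrF n b α) = fun S x => α S x - ctrF n b (wdgF n b α) S x :=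
    car_diag_w b α
  have h2 : ctrF n b (wdgF n a (wdgF n b α)) S x
      = -(wdgF n a (ctrF n b (wdgF n b α)) S x) := by
    rw [ctr_wdg_off hab (wdgF n b α)]
  rw [h1, wdg_sub]
  beta_reduce
  rw [h2]
  ring

lemma car3c_ne {n : ℕ} {a b j : ℕ} (hja : j ≠ a) (hjb : j ≠ b) (α : FForm n) :
    (fun S x => wdgF n a (wdgF n b (ctrF n j α)) S x
        - ctrF n j (wdgF n a (wdgF n b α)) S x) = fun _ _ => (0:ℝ) := by
  funext S x
  have h1 : wdgF n b (ctrF n j α) = fun S x => -(ctrF n j (wdgF n b α) S x) :=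
    car_off (Ne.symm hjb) α
  have h2 : ctrF n j (wdgF n a (wdgF n b α)) S x
      = -(wdgF n a (ctrF n j (wdgF n b α)) S x) := by
    rw [ctr_wdg_off (Ne.symm hja) (wdgF n b α)]
  rw [h1, wdg_neg, h2]
  ring

lemma SM_smul {n : ℕ} (u : ℝ) {β : FForm n} (hβ : SM n β) :
    SM n (fun S x => u * β S x) := fun S => contDiff_const.mul (hβ S)

lemma ctr_through {n : ℕ} (i : ℕ) {ι : Type*} (s : Finset ι) (u : ι → ℝ)
    (jdx : ι → ℕ) (a c : ι → ℝ) (P : ι → FForm n) (hP : ∀ k ∈ s, SM n (P k)) :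
    ctrF n i (fun S x => ∑ k ∈ s, u k * Sop n (jdx k) (a k) (c k) (P k) S x)
    = fun S x => ∑ k ∈ s, u k * Sop n (jdx k) (a k) (c k) (ctrF n i (P k)) S x := by
  rw [ctr_sum s (fun k => fun S x => u k * Sop n (jdx k) (a k) (c k) (P k) S x)]
  funext S x
  refine Finset.sum_congr rfl (fun k hk => ?_)
  rw [ctr_smul (u k) (Sop n (jdx k) (a k) (c k) (P k)), ctr_Sop (hP k hk)]

lemma wdg_through {n : ℕ} (i : ℕ) {ι : Type*} (s : Finset ι) (u : ι → ℝ)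
    (jdx : ι → ℕ) (a c : ι → ℝ) (P : ι → FForm n) (hP : ∀ k ∈ s, SM n (P k)) :
    wdgF n i (fun S x => ∑ k ∈ s, u k * Sop n (jdx k) (a k) (c k) (P k) S x)
    = fun S x => ∑ k ∈ s, u k * Sop n (jdx k) (a k) (c k) (wdgF n i (P k)) S x := by
  rw [wdg_sum s (fun k => fun S x => u k * Sop n (jdx k) (a k) (c k) (P k) S x)]
  funext S x
  refine Finset.sum_congr rfl (fun k hk => ?_)
  rw [wdg_smul (u k) (Sop n (jdx k) (a k) (c k) (P k)), wdg_Sop (hP k hk)]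

lemma Sop_through {n j : ℕ} (a c : ℝ) {ι : Type*} (s : Finset ι) (u : ι → ℝ)
    (Q : ι → FForm n) (hQ : ∀ k ∈ s, SM n (Q k)) :
    Sop n j a c (fun S x => ∑ k ∈ s, u k * Q k S x)
    = fun S x => ∑ k ∈ s, u k * Sop n j a c (Q k) S x := by
  rw [Sop_sum a c s (fun k => fun S x => u k * Q k S x)
    (fun k hk => SM_smul (u k) (hQ k hk))]
  funext S x
  exact Finset.sum_congr rfl (fun k hk => by rw [Sop_smul a c (u k) (hQ k hk)])

section Main2
variable {n : ℕ} {T : ℝ} {lam : ℕ → ℝ}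

lemma dWL_eq {α : FForm n} (hα : SM n α) :
    dWL n T lam α = fun S x => ∑ j ∈ Finset.range (2*n),
      co j * Sop n j 1 (T * lam j) (ctrF n (sig j) α) S x := by
  have hΛ : SM n (LamF n α) :=
    SM_sum (Finset.range n) (fun i => ctrF n (2*i+1) (ctrF n (2*i) α))
      (fun i _ => SM_ctr (SM_ctr hα _) _)
  funext S x
  simp only [dWL]
  rw [dW_eq hΛ, dW_eq hα]
  -- A-term
  have hA : ∀ j, wdgF n j (LamF n α)
      = fun S x => ∑ i ∈ Finset.range n,
          wdgF n j (ctrF n (2*i+1) (ctrF n (2*i) α)) S x :=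
    fun j => wdg_sum (Finset.range n) (fun i => ctrF n (2*i+1) (ctrF n (2*i) α))
  have hB : LamF n (fun S x => ∑ j ∈ Finset.range (2*n),
        Sop n j 1 (T * lam j) (wdgF n j α) S x) S x
      = ∑ i ∈ Finset.range n, ∑ j ∈ Finset.range (2*n),
          Sop n j 1 (T * lam j) (ctrF n (2*i+1) (ctrF n (2*i) (wdgF n j α))) S x := by
    show ∑ i ∈ Finset.range n, ctrF n (2*i+1) (ctrF n (2*i) (fun S x => ∑ j ∈ Finset.range (2*n),
        Sop n j 1 (T * lam j) (wdgF n j α) S x)) S x = _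
    refine Finset.sum_congr rfl (fun i _ => ?_)
    have e1 : ctrF n (2*i) (fun S x => ∑ j ∈ Finset.range (2*n),
          Sop n j 1 (T * lam j) (wdgF n j α) S x)
        = fun S x => ∑ j ∈ Finset.range (2*n),
            Sop n j 1 (T * lam j) (ctrF n (2*i) (wdgF n j α)) S x := by
      have := ctr_through (n := n) (2*i) (Finset.range (2*n)) (fun _ => 1)
        (fun j => j) (fun _ => 1) (fun j => T * lam j) (fun j => wdgF n j α)
        (fun j _ => SM_wdg hα j)
      simpa using this
    rw [e1]
    have e2 := ctr_through (n := n) (2*i+1) (Finset.range (2*n)) (fun _ => 1)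
      (fun j => j) (fun _ => 1) (fun j => T * lam j)
      (fun j => ctrF n (2*i) (wdgF n j α))
      (fun j _ => SM_ctr (SM_wdg hα j) _)
    simp only [one_mul] at e2
    rw [e2]
  show (∑ j ∈ Finset.range (2*n), Sop n j 1 (T * lam j) (wdgF n j (LamF n α)) S x)
      - LamF n (fun S x => ∑ j ∈ Finset.range (2*n),
          Sop n j 1 (T * lam j) (wdgF n j α) S x) S x = _
  rw [hB, Finset.sum_comm, ← Finset.sum_sub_distrib]
  refine Finset.sum_congr rfl (fun j hj => ?_)
  have hj2 : j < 2*n := Finset.mem_range.1 hj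
  rw [hA j]
  have e3 : Sop n j 1 (T * lam j) (fun S x => ∑ i ∈ Finset.range n,
        wdgF n j (ctrF n (2*i+1) (ctrF n (2*i) α)) S x) S x
      = ∑ i ∈ Finset.range n,
          Sop n j 1 (T * lam j) (wdgF n j (ctrF n (2*i+1) (ctrF n (2*i) α))) S x := by
    have := Sop_sum (n := n) (j := j) 1 (T * lam j) (Finset.range n)
      (fun i => wdgF n j (ctrF n (2*i+1) (ctrF n (2*i) α)))
      (fun i _ => SM_wdg (SM_ctr (SM_ctr hα _) _) _)
    exact congrFun (congrFun this S) x
  rw [e3, ← Finset.sum_sub_distrib]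
  -- now for fixed j: sum over i of Sop_B j (E_j C_{2i+1} C_{2i} α  -  C_{2i+1} C_{2i} E_j α)
  have key : ∀ i ∈ Finset.range n,
      Sop n j 1 (T * lam j) (wdgF n j (ctrF n (2*i+1) (ctrF n (2*i) α))) S x
        - Sop n j 1 (T * lam j) (ctrF n (2*i+1) (ctrF n (2*i) (wdgF n j α))) S x
      = Sop n j 1 (T * lam j) (fun S x =>
          wdgF n j (ctrF n (2*i+1) (ctrF n (2*i) α)) S x
            - ctrF n (2*i+1) (ctrF n (2*i) (wdgF n j α)) S x) S x := by
    intro i _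
    rw [Sop_sub 1 (T * lam j) (SM_wdg (SM_ctr (SM_ctr hα _) _) _)
      (SM_ctr (SM_ctr (SM_wdg hα _) _) _)]
  rw [Finset.sum_congr rfl key]
  -- evaluate the i-sum via the delta structure
  rcases Nat.even_or_odd j with he | ho
  · -- j even: j = 2*i₀, contributes -Sop_B j (ctr (j+1) α)
    obtain ⟨i₀, hi₀⟩ := he
    have hi₀' : j = 2*i₀ := by omega
    subst hi₀'
    rw [Finset.sum_eq_single i₀ ?side1 ?side2]
    · rw [car3_eq_b (by omega : (2*i₀+1 : ℕ) ≠ 2*i₀) α, Sop_neg]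
      have hco : co (2*i₀) = -1 := by unfold co; rw [if_pos (by omega)]
      rw [hco, sig_two_mul]
      ring
    case side1 =>
      intro i _ hne
      rw [car3_ne (by omega : (2*i₀ : ℕ) ≠ 2*i+1) (by omega : (2*i₀ : ℕ) ≠ 2*i) α, Sop_zero]
    case side2 =>
      intro hc
      exact absurd (Finset.mem_range.2 (by omega)) hc
  · obtain ⟨i₀, hi₀⟩ := ho
    subst hi₀
    rw [Finset.sum_eq_single i₀ ?side1 ?side2]
    · rw [car3_eq_a (by omega : (2*i₀+1 : ℕ) ≠ 2*i₀) α]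
      have hco : co (2*i₀+1) = 1 := by unfold co; rw [if_neg (by omega)]
      rw [hco, sig_two_mul_add_one]
      ring
    case side1 =>
      intro i _ hne
      rw [car3_ne (by omega : (2*i₀+1 : ℕ) ≠ 2*i+1) (by omega : (2*i₀+1 : ℕ) ≠ 2*i) α, Sop_zero]
    case side2 =>
      intro hc
      exact absurd (Finset.mem_range.2 (by omega)) hc

end Main2

section Main3
variable {n : ℕ} {T : ℝ} {lam : ℕ → ℝ}

lemma dWLStar_eq {α : FForm n} (hα : SM n α) :
    dWLStar n T lam α = fun S x => ∑ j ∈ Finset.range (2*n),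
      co j * Sop n j (-1) (T * lam j) (wdgF n (sig j) α) S x := by
  have hLF : SM n (LF n α) :=
    SM_sum (Finset.range n) (fun i => wdgF n (2*i) (wdgF n (2*i+1) α))
      (fun i _ => SM_wdg (SM_wdg hα _) _)
  funext S x
  simp only [dWLStar]
  rw [dWStar_eq hLF, dWStar_eq hα]
  -- LF (dWStar α) term
  have hB : LF n (fun S x => ∑ j ∈ Finset.range (2*n),
        Sop n j (-1) (T * lam j) (ctrF n j α) S x) S x
      = ∑ i ∈ Finset.range n, ∑ j ∈ Finset.range (2*n),
          Sop n j (-1) (T * lam j) (wdgF n (2*i) (wdgF n (2*i+1) (ctrF n j α))) S x := by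
    show ∑ i ∈ Finset.range n, wdgF n (2*i) (wdgF n (2*i+1) (fun S x => ∑ j ∈ Finset.range (2*n),
        Sop n j (-1) (T * lam j) (ctrF n j α) S x)) S x = _
    refine Finset.sum_congr rfl (fun i _ => ?_)
    have e1 : wdgF n (2*i+1) (fun S x => ∑ j ∈ Finset.range (2*n),
          Sop n j (-1) (T * lam j) (ctrF n j α) S x)
        = fun S x => ∑ j ∈ Finset.range (2*n),
            Sop n j (-1) (T * lam j) (wdgF n (2*i+1) (ctrF n j α)) S x := by
      have := wdg_through (n := n) (2*i+1) (Finset.range (2*n)) (fun _ => 1)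
        (fun j => j) (fun _ => -1) (fun j => T * lam j) (fun j => ctrF n j α)
        (fun j _ => SM_ctr hα j)
      simpa using this
    rw [e1]
    have e2 := wdg_through (n := n) (2*i) (Finset.range (2*n)) (fun _ => 1)
      (fun j => j) (fun _ => -1) (fun j => T * lam j)
      (fun j => wdgF n (2*i+1) (ctrF n j α))
      (fun j _ => SM_wdg (SM_ctr hα j) _)
    simp only [one_mul] at e2
    rw [e2]
  -- dWStar (LF α) term
  have hC : ∀ j, ctrF n j (LF n α)
      = fun S x => ∑ i ∈ Finset.range n,
          ctrF n j (wdgF n (2*i) (wdgF n (2*i+1) α)) S x :=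
    fun j => ctr_sum (Finset.range n) (fun i => wdgF n (2*i) (wdgF n (2*i+1) α))
  show LF n (fun S x => ∑ j ∈ Finset.range (2*n),
        Sop n j (-1) (T * lam j) (ctrF n j α) S x) S x
      - (∑ j ∈ Finset.range (2*n), Sop n j (-1) (T * lam j) (ctrF n j (LF n α)) S x) = _
  rw [hB, Finset.sum_comm, ← Finset.sum_sub_distrib]
  refine Finset.sum_congr rfl (fun j hj => ?_)
  have hj2 : j < 2*n := Finset.mem_range.1 hj
  rw [hC j]
  have e3 : Sop n j (-1) (T * lam j) (fun S x => ∑ i ∈ Finset.range n,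
        ctrF n j (wdgF n (2*i) (wdgF n (2*i+1) α)) S x) S x
      = ∑ i ∈ Finset.range n,
          Sop n j (-1) (T * lam j) (ctrF n j (wdgF n (2*i) (wdgF n (2*i+1) α))) S x := by
    have := Sop_sum (n := n) (j := j) (-1) (T * lam j) (Finset.range n)
      (fun i => ctrF n j (wdgF n (2*i) (wdgF n (2*i+1) α)))
      (fun i _ => SM_ctr (SM_wdg (SM_wdg hα _) _) _)
    exact congrFun (congrFun this S) x
  rw [e3, ← Finset.sum_sub_distrib]
  have key : ∀ i ∈ Finset.range n,
      Sop n j (-1) (T * lam j) (wdgF n (2*i) (wdgF n (2*i+1) (ctrF n j α))) S x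
        - Sop n j (-1) (T * lam j) (ctrF n j (wdgF n (2*i) (wdgF n (2*i+1) α))) S x
      = Sop n j (-1) (T * lam j) (fun S x =>
          wdgF n (2*i) (wdgF n (2*i+1) (ctrF n j α)) S x
            - ctrF n j (wdgF n (2*i) (wdgF n (2*i+1) α)) S x) S x := by
    intro i _
    rw [Sop_sub (-1) (T * lam j) (SM_wdg (SM_wdg (SM_ctr hα _) _) _)
      (SM_ctr (SM_wdg (SM_wdg hα _) _) _)]
  rw [Finset.sum_congr rfl key]
  rcases Nat.even_or_odd j with he | ho
  · obtain ⟨i₀, hi₀⟩ := he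
    have hi₀' : j = 2*i₀ := by omega
    subst hi₀'
    rw [Finset.sum_eq_single i₀ ?side1 ?side2]
    · rw [car3c_eq_a (by omega : (2*i₀ : ℕ) ≠ 2*i₀+1) α, Sop_neg]
      have hco : co (2*i₀) = -1 := by unfold co; rw [if_pos (by omega)]
      rw [hco, sig_two_mul]
      ring
    case side1 =>
      intro i _ hne
      rw [car3c_ne (by omega : (2*i₀ : ℕ) ≠ 2*i) (by omega : (2*i₀ : ℕ) ≠ 2*i+1) α, Sop_zero]
    case side2 =>
      intro hc
      exact absurd (Finset.mem_range.2 (by omega)) hc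
  · obtain ⟨i₀, hi₀⟩ := ho
    subst hi₀
    rw [Finset.sum_eq_single i₀ ?side1 ?side2]
    · rw [car3c_eq_b (by omega : (2*i₀ : ℕ) ≠ 2*i₀+1) α]
      have hco : co (2*i₀+1) = 1 := by unfold co; rw [if_neg (by omega)]
      rw [hco, sig_two_mul_add_one]
      ring
    case side1 =>
      intro i _ hne
      rw [car3c_ne (by omega : (2*i₀+1 : ℕ) ≠ 2*i) (by omega : (2*i₀+1 : ℕ) ≠ 2*i+1) α, Sop_zero]
    case side2 =>
      intro hc
      exact absurd (Finset.mem_range.2 (by omega)) hc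

end Main3

section Main4
variable {n : ℕ} {T : ℝ} {lam : ℕ → ℝ}

lemma diag_val {j : ℕ} (hj2 : j < 2*n) (hlam : ∀ i, lam i = 1 ∨ lam i = -1)
    {α : FForm n} (hα : SM n α) (m : ℕ) (S : Finset ℕ) (x : Pt n) :
    Sop n j (-1) (T*lam j) (Sop n j 1 (T*lam j) (wdgF n m (ctrF n m α))) S x
      + Sop n j 1 (T*lam j) (Sop n j (-1) (T*lam j) (ctrF n m (wdgF n m α))) S x
    = -(pd n j (pd n j (α S)) x) + T^2 * (Xc n j x)^2 * α S x
        + T * lam j * α S x - 2 * T * lam j * wdgF n m (ctrF n m α) S x := by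
  have hβ : SM n (wdgF n m (ctrF n m α)) := SM_wdg (SM_ctr hα _) _
  have hγ : SM n (ctrF n m (wdgF n m α)) := SM_ctr (SM_wdg hα _) _
  rw [Sop_AB hj2 (T*lam j) hβ, Sop_BA hj2 (T*lam j) hγ]
  have hc2 : (T*lam j)^2 = T^2 := by
    rcases hlam j with h | h <;> rw [h] <;> ring
  beta_reduce
  rw [hc2]
  have hS : (fun y => wdgF n m (ctrF n m α) S y + ctrF n m (wdgF n m α) S y) = α S :=
    funext (fun y => car_diag m α S y)
  have hpd2 : pd n j (pd n j (α S)) x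
      = pd n j (pd n j (wdgF n m (ctrF n m α) S)) x
        + pd n j (pd n j (ctrF n m (wdgF n m α) S)) x := by
    have h1 : pd n j (α S) = fun y => pd n j (wdgF n m (ctrF n m α) S) y
        + pd n j (ctrF n m (wdgF n m α) S) y := by
      rw [← hS, pd_add ((hβ S).differentiable (by simp)) ((hγ S).differentiable (by simp))]
    rw [h1, pd_add (pd_differentiable (hβ S)) (pd_differentiable (hγ S))]
  have hBv : pd n j (pd n j (ctrF n m (wdgF n m α) S)) x
      = pd n j (pd n j (α S)) x - pd n j (pd n j (wdgF n m (ctrF n m α) S)) x := by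
    linarith
  have hγval : ctrF n m (wdgF n m α) S x = α S x - wdgF n m (ctrF n m α) S x := by
    have := car_diag m α S x; linarith
  rw [hBv, hγval]
  ring

lemma diag_val' {j : ℕ} (hj2 : j < 2*n) (hlam : ∀ i, lam i = 1 ∨ lam i = -1)
    {α : FForm n} (hα : SM n α) (m : ℕ) (S : Finset ℕ) (x : Pt n) :
    Sop n j (-1) (T*lam j) (Sop n j 1 (T*lam j) (ctrF n m (wdgF n m α))) S x
      + Sop n j 1 (T*lam j) (Sop n j (-1) (T*lam j) (wdgF n m (ctrF n m α))) S x
    = -(pd n j (pd n j (α S)) x) + T^2 * (Xc n j x)^2 * α S x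
        - T * lam j * α S x + 2 * T * lam j * wdgF n m (ctrF n m α) S x := by
  have hβ : SM n (wdgF n m (ctrF n m α)) := SM_wdg (SM_ctr hα _) _
  have hγ : SM n (ctrF n m (wdgF n m α)) := SM_ctr (SM_wdg hα _) _
  rw [Sop_AB hj2 (T*lam j) hγ, Sop_BA hj2 (T*lam j) hβ]
  beta_reduce
  have hc2 : (T*lam j)^2 = T^2 := by
    rcases hlam j with h | h <;> rw [h] <;> ring
  rw [hc2]
  have hS : (fun y => wdgF n m (ctrF n m α) S y + ctrF n m (wdgF n m α) S y) = α S :=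
    funext (fun y => car_diag m α S y)
  have hpd2 : pd n j (pd n j (α S)) x
      = pd n j (pd n j (wdgF n m (ctrF n m α) S)) x
        + pd n j (pd n j (ctrF n m (wdgF n m α) S)) x := by
    have h1 : pd n j (α S) = fun y => pd n j (wdgF n m (ctrF n m α) S) y
        + pd n j (ctrF n m (wdgF n m α) S) y := by
      rw [← hS, pd_add ((hβ S).differentiable (by simp)) ((hγ S).differentiable (by simp))]
    rw [h1, pd_add (pd_differentiable (hβ S)) (pd_differentiable (hγ S))]
  have hBv : pd n j (pd n j (ctrF n m (wdgF n m α) S)) x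
      = pd n j (pd n j (α S)) x - pd n j (pd n j (wdgF n m (ctrF n m α) S)) x := by
    linarith
  have hγval : ctrF n m (wdgF n m α) S x = α S x - wdgF n m (ctrF n m α) S x := by
    have := car_diag m α S x; linarith
  rw [hBv, hγval]
  ring

lemma LapW_eq (hlam : ∀ i, lam i = 1 ∨ lam i = -1) {α : FForm n} (hα : SM n α) :
    LapW n T lam α = fun S x => ∑ j ∈ Finset.range (2*n),
      (-(pd n j (pd n j (α S)) x) + T^2 * (Xc n j x)^2 * α S x
        - T * lam j * α S x + 2 * T * lam j * wdgF n j (ctrF n j α) S x) := by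
  have hdW : SM n (dW n T lam α) := by
    rw [dW_eq hα]
    exact SM_sum _ _ (fun j _ => SM_Sop (SM_wdg hα _) _ _ _)
  have hdWS : SM n (dWStar n T lam α) := by
    rw [dWStar_eq hα]
    exact SM_sum _ _ (fun j _ => SM_Sop (SM_ctr hα _) _ _ _)
  funext S x
  simp only [LapW]
  rw [dWStar_eq hdW, dW_eq hdWS, dW_eq hα, dWStar_eq hα]
  beta_reduce
  have step1 : ∀ j ∈ Finset.range (2*n),
      Sop n j (-1) (T*lam j) (ctrF n j (fun S x => ∑ k ∈ Finset.range (2*n),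
          Sop n k 1 (T*lam k) (wdgF n k α) S x)) S x
      = ∑ k ∈ Finset.range (2*n),
          Sop n j (-1) (T*lam j) (Sop n k 1 (T*lam k) (ctrF n j (wdgF n k α))) S x := by
    intro j hj
    have e1 : ctrF n j (fun S x => ∑ k ∈ Finset.range (2*n),
          Sop n k 1 (T*lam k) (wdgF n k α) S x)
        = fun S x => ∑ k ∈ Finset.range (2*n),
            Sop n k 1 (T*lam k) (ctrF n j (wdgF n k α)) S x := by
      have := ctr_through (n := n) j (Finset.range (2*n)) (fun _ => 1)
        (fun k => k) (fun _ => 1) (fun k => T * lam k) (fun k => wdgF n k α)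
        (fun k _ => SM_wdg hα k)
      simpa using this
    rw [e1]
    have e2 := Sop_sum (n := n) (j := j) (-1) (T*lam j) (Finset.range (2*n))
      (fun k => Sop n k 1 (T*lam k) (ctrF n j (wdgF n k α)))
      (fun k _ => SM_Sop (SM_ctr (SM_wdg hα _) _) _ _ _)
    exact congrFun (congrFun e2 S) x
  have step2 : ∀ j ∈ Finset.range (2*n),
      Sop n j 1 (T*lam j) (wdgF n j (fun S x => ∑ k ∈ Finset.range (2*n),
          Sop n k (-1) (T*lam k) (ctrF n k α) S x)) S x
      = ∑ k ∈ Finset.range (2*n),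
          Sop n j 1 (T*lam j) (Sop n k (-1) (T*lam k) (wdgF n j (ctrF n k α))) S x := by
    intro j hj
    have e1 : wdgF n j (fun S x => ∑ k ∈ Finset.range (2*n),
          Sop n k (-1) (T*lam k) (ctrF n k α) S x)
        = fun S x => ∑ k ∈ Finset.range (2*n),
            Sop n k (-1) (T*lam k) (wdgF n j (ctrF n k α)) S x := by
      have := wdg_through (n := n) j (Finset.range (2*n)) (fun _ => 1)
        (fun k => k) (fun _ => -1) (fun k => T * lam k) (fun k => ctrF n k α)
        (fun k _ => SM_ctr hα k)
      simpa using this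
    rw [e1]
    have e2 := Sop_sum (n := n) (j := j) 1 (T*lam j) (Finset.range (2*n))
      (fun k => Sop n k (-1) (T*lam k) (wdgF n j (ctrF n k α)))
      (fun k _ => SM_Sop (SM_wdg (SM_ctr hα _) _) _ _ _)
    exact congrFun (congrFun e2 S) x
  rw [Finset.sum_congr rfl step1, Finset.sum_congr rfl step2, Finset.sum_comm,
    ← Finset.sum_add_distrib]
  refine Finset.sum_congr rfl (fun j hj => ?_)
  have hj2 : j < 2*n := Finset.mem_range.1 hj
  rw [← Finset.sum_add_distrib]
  rw [Finset.sum_eq_single j ?off ?notmem]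
  · exact diag_val' hj2 hlam hα j S x
  case off =>
    intro k hk hne
    have hk2 : k < 2*n := Finset.mem_range.1 hk
    rw [ctr_wdg_off (Ne.symm hne) α, Sop_neg, Sop_neg,
      Sop_Sop_comm hj2 hk2 (Ne.symm hne) 1 (T*lam j) (-1) (T*lam k)
        (SM_wdg (SM_ctr hα _) _)]
    beta_reduce
    ring
  case notmem =>
    intro hc
    exact absurd (Finset.mem_range.2 hj2) hc

end Main4

section Main5
variable {n : ℕ} {T : ℝ} {lam : ℕ → ℝ}

lemma LapWL_eq (hlam : ∀ i, lam i = 1 ∨ lam i = -1) {α : FForm n} (hα : SM n α) :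
    LapWL n T lam α = fun S x => ∑ j ∈ Finset.range (2*n),
      (-(pd n j (pd n j (α S)) x) + T^2 * (Xc n j x)^2 * α S x
        + T * lam j * α S x - 2 * T * lam j * wdgF n (sig j) (ctrF n (sig j) α) S x) := by
  have hdWL : SM n (dWL n T lam α) := by
    rw [dWL_eq hα]
    exact SM_sum _ _ (fun j _ => SM_smul _ (SM_Sop (SM_ctr hα _) _ _ _))
  have hdWLS : SM n (dWLStar n T lam α) := by
    rw [dWLStar_eq hα]
    exact SM_sum _ _ (fun j _ => SM_smul _ (SM_Sop (SM_wdg hα _) _ _ _))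
  funext S x
  simp only [LapWL]
  rw [dWLStar_eq hdWL, dWL_eq hdWLS, dWL_eq hα, dWLStar_eq hα]
  beta_reduce
  have step1 : ∀ j ∈ Finset.range (2*n),
      co j * Sop n j (-1) (T*lam j) (wdgF n (sig j) (fun S x => ∑ k ∈ Finset.range (2*n),
          co k * Sop n k 1 (T*lam k) (ctrF n (sig k) α) S x)) S x
      = ∑ k ∈ Finset.range (2*n), co j * (co k *
          Sop n j (-1) (T*lam j) (Sop n k 1 (T*lam k)
            (wdgF n (sig j) (ctrF n (sig k) α))) S x) := by
    intro j hj
    have e1 : wdgF n (sig j) (fun S x => ∑ k ∈ Finset.range (2*n),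
          co k * Sop n k 1 (T*lam k) (ctrF n (sig k) α) S x)
        = fun S x => ∑ k ∈ Finset.range (2*n),
            co k * Sop n k 1 (T*lam k) (wdgF n (sig j) (ctrF n (sig k) α)) S x :=
      wdg_through (n := n) (sig j) (Finset.range (2*n)) co
        (fun k => k) (fun _ => 1) (fun k => T * lam k) (fun k => ctrF n (sig k) α)
        (fun k _ => SM_ctr hα _)
    rw [e1]
    have e2 := Sop_through (n := n) (j := j) (-1) (T*lam j) (Finset.range (2*n)) co
      (fun k => Sop n k 1 (T*lam k) (wdgF n (sig j) (ctrF n (sig k) α)))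
      (fun k _ => SM_Sop (SM_wdg (SM_ctr hα _) _) _ _ _)
    rw [e2]
    beta_reduce
    rw [Finset.mul_sum]
  have step2 : ∀ j ∈ Finset.range (2*n),
      co j * Sop n j 1 (T*lam j) (ctrF n (sig j) (fun S x => ∑ k ∈ Finset.range (2*n),
          co k * Sop n k (-1) (T*lam k) (wdgF n (sig k) α) S x)) S x
      = ∑ k ∈ Finset.range (2*n), co j * (co k *
          Sop n j 1 (T*lam j) (Sop n k (-1) (T*lam k)
            (ctrF n (sig j) (wdgF n (sig k) α))) S x) := by
    intro j hj
    have e1 : ctrF n (sig j) (fun S x => ∑ k ∈ Finset.range (2*n),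
          co k * Sop n k (-1) (T*lam k) (wdgF n (sig k) α) S x)
        = fun S x => ∑ k ∈ Finset.range (2*n),
            co k * Sop n k (-1) (T*lam k) (ctrF n (sig j) (wdgF n (sig k) α)) S x :=
      ctr_through (n := n) (sig j) (Finset.range (2*n)) co
        (fun k => k) (fun _ => -1) (fun k => T * lam k) (fun k => wdgF n (sig k) α)
        (fun k _ => SM_wdg hα _)
    rw [e1]
    have e2 := Sop_through (n := n) (j := j) 1 (T*lam j) (Finset.range (2*n)) co
      (fun k => Sop n k (-1) (T*lam k) (ctrF n (sig j) (wdgF n (sig k) α)))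
      (fun k _ => SM_Sop (SM_ctr (SM_wdg hα _) _) _ _ _)
    rw [e2]
    beta_reduce
    rw [Finset.mul_sum]
  rw [Finset.sum_congr rfl step1, Finset.sum_congr rfl step2, Finset.sum_comm,
    ← Finset.sum_add_distrib]
  refine Finset.sum_congr rfl (fun j hj => ?_)
  have hj2 : j < 2*n := Finset.mem_range.1 hj
  rw [← Finset.sum_add_distrib]
  rw [Finset.sum_eq_single j ?off ?notmem]
  · have h := diag_val (T := T) hj2 hlam hα (sig j) S x
    calc co j * (co j * Sop n j (-1) (T*lam j) (Sop n j 1 (T*lam j)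
            (wdgF n (sig j) (ctrF n (sig j) α))) S x)
          + co j * (co j * Sop n j 1 (T*lam j) (Sop n j (-1) (T*lam j)
            (ctrF n (sig j) (wdgF n (sig j) α))) S x)
        = (co j * co j) * (Sop n j (-1) (T*lam j) (Sop n j 1 (T*lam j)
            (wdgF n (sig j) (ctrF n (sig j) α))) S x
          + Sop n j 1 (T*lam j) (Sop n j (-1) (T*lam j)
            (ctrF n (sig j) (wdgF n (sig j) α))) S x) := by ring
      _ = _ := by rw [co_sq, one_mul, h]
  case off =>
    intro k hk hne
    have hk2 : k < 2*n := Finset.mem_range.1 hk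
    rw [ctr_wdg_off (sig_ne hne : sig k ≠ sig j) α, Sop_neg, Sop_neg,
      Sop_Sop_comm hj2 hk2 (Ne.symm hne) 1 (T*lam j) (-1) (T*lam k)
        (SM_wdg (SM_ctr hα _) _)]
    beta_reduce
    ring
  case notmem =>
    intro hc
    exact absurd (Finset.mem_range.2 hj2) hc

end Main5


/-- On `ℝ^{2n}` with Euclidean metric, standard symplectic
form, and `f = (T/2) ∑ᵢ λᵢ xᵢ²`, the deformed symplectic Laplacian equals
`Δ_{d^Λ_f} = ∑ᵢ(−∂ᵢ² + T²xᵢ² − T) + T ∑ᵢ (1 + λ_{Ji} − 2λ_{Ji} eᵢ eᵢ†)`, and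
consequently
`Δ_{d_f} − Δ_{d^Λ_f} = 2T ∑_{i=1}^n (λ_{2i−1}+λ_{2i})(e_{2i−1}e_{2i−1}† + e_{2i}e_{2i}† − 1)`. -/
theorem witten_symplectic_laplacian_local_form (n : ℕ) (T : ℝ) (hT : 0 < T)
    (lam : ℕ → ℝ) (hlam : ∀ i, lam i = 1 ∨ lam i = -1)
    (α : FForm n) (hα : ∀ S : Finset ℕ, ContDiff ℝ (⊤ : ℕ∞) (α S)) :
    LapWL n T lam α =
      (fun S x =>
        (∑ i ∈ Finset.range (2 * n),
          (-(pd n i (pd n i (α S)) x) + T ^ 2 * (Xc n i x) ^ 2 * α S x - T * α S x)) +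
        T * ∑ i ∈ Finset.range (2 * n),
          ((1 + lamJ lam i) * α S x - 2 * lamJ lam i * wdgF n i (ctrF n i α) S x)) ∧
    (fun S x => LapW n T lam α S x - LapWL n T lam α S x) =
      (fun (S : Finset ℕ) (x : Pt n) =>
        2 * T * ∑ i ∈ Finset.range n,
          (lam (2 * i) + lam (2 * i + 1)) *
            (wdgF n (2 * i) (ctrF n (2 * i) α) S x +
              wdgF n (2 * i + 1) (ctrF n (2 * i + 1) α) S x - α S x)) := by
  have hSM : SM n α := hα
  constructor
  · rw [LapWL_eq hlam hSM]
    funext S x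
    have h2 : ∑ j ∈ Finset.range (2*n),
        (T * lam j * α S x - 2 * T * lam j * wdgF n (sig j) (ctrF n (sig j) α) S x)
        = ∑ j ∈ Finset.range (2*n),
            (T * lamJ lam j * α S x - 2 * T * lamJ lam j * wdgF n j (ctrF n j α) S x) := by
      calc ∑ j ∈ Finset.range (2*n),
            (T * lam j * α S x - 2 * T * lam j * wdgF n (sig j) (ctrF n (sig j) α) S x)
          = ∑ j ∈ Finset.range (2*n), (fun m => T * lam (sig m) * α S x
              - 2 * T * lam (sig m) * wdgF n m (ctrF n m α) S x) (sig j) := by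
            refine Finset.sum_congr rfl (fun j _ => ?_)
            beta_reduce
            rw [sig_sig]
        _ = ∑ j ∈ Finset.range (2*n), (T * lam (sig j) * α S x
              - 2 * T * lam (sig j) * wdgF n j (ctrF n j α) S x) := by
            exact sum_sig (fun m => T * lam (sig m) * α S x
              - 2 * T * lam (sig m) * wdgF n m (ctrF n m α) S x)
        _ = _ := by
            refine Finset.sum_congr rfl (fun j _ => ?_)
            rw [lam_sig lam j]
    calc ∑ j ∈ Finset.range (2*n),
          (-(pd n j (pd n j (α S)) x) + T^2 * (Xc n j x)^2 * α S x
            + T * lam j * α S x - 2 * T * lam j * wdgF n (sig j) (ctrF n (sig j) α) S x)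
        = (∑ j ∈ Finset.range (2*n),
            (-(pd n j (pd n j (α S)) x) + T^2 * (Xc n j x)^2 * α S x - T * α S x))
          + ∑ j ∈ Finset.range (2*n),
            (T * α S x + T * lam j * α S x
              - 2 * T * lam j * wdgF n (sig j) (ctrF n (sig j) α) S x) := by
          rw [← Finset.sum_add_distrib]
          exact Finset.sum_congr rfl (fun j _ => by ring)
      _ = _ := by
          congr 1
          have h3 : ∑ j ∈ Finset.range (2*n),
              (T * α S x + T * lam j * α S x
                - 2 * T * lam j * wdgF n (sig j) (ctrF n (sig j) α) S x)
              = ∑ j ∈ Finset.range (2*n), (T * α S x)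
                + ∑ j ∈ Finset.range (2*n), (T * lam j * α S x
                    - 2 * T * lam j * wdgF n (sig j) (ctrF n (sig j) α) S x) := by
            rw [← Finset.sum_add_distrib]
            exact Finset.sum_congr rfl (fun j _ => by ring)
          rw [h3, h2, Finset.mul_sum, ← Finset.sum_add_distrib]
          exact Finset.sum_congr rfl (fun j _ => by ring)
  · funext S x
    rw [LapW_eq hlam hSM, LapWL_eq hlam hSM]
    beta_reduce
    rw [← Finset.sum_sub_distrib]
    have hstep : ∀ j ∈ Finset.range (2*n),
        ((-(pd n j (pd n j (α S)) x) + T^2 * (Xc n j x)^2 * α S x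
            - T * lam j * α S x + 2 * T * lam j * wdgF n j (ctrF n j α) S x)
          - (-(pd n j (pd n j (α S)) x) + T^2 * (Xc n j x)^2 * α S x
            + T * lam j * α S x - 2 * T * lam j * wdgF n (sig j) (ctrF n (sig j) α) S x))
        = 2 * T * lam j * (wdgF n j (ctrF n j α) S x
            + wdgF n (sig j) (ctrF n (sig j) α) S x - α S x) := by
      intro j _
      ring
    rw [Finset.sum_congr rfl hstep, sum_range_two_mul, Finset.mul_sum]
    refine Finset.sum_congr rfl (fun i _ => ?_)
    rw [sig_two_mul, sig_two_mul_add_one]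
    ring


end
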